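/- arXiv:1702.03646 — 6 statements merged into one kernel-verified Lean document; each statement's English description precedes it below -/
import Mathlib

section
/- Let f : ℝ → ℝ be C^∞, with f(t) ≤ 0 for all t and f^(j)(0) = 0 for all j = 0,…,2k. Then f^(2k+1)(0) = 0. -/
open Set

private lemma iteratedDerivWithin_eq_of_contDiff' (f : ℝ → ℝ) (hf : ContDiff ℝ (⊤ : ℕ∞) f)
    {s : Set ℝ} (hs : UniqueDiffOn ℝ s) (n : ℕ) {x : ℝ} (hx : x ∈ s) :
    iteratedDerivWithin n f s x = iteratedDeriv n f x := by
  have h : HasFTaylorSeriesUpTo (⊤ : ℕ∞) f (ftaylorSeries ℝ f) :=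
    contDiff_iff_ftaylorSeries.mp (hf.of_le (by simp))
  have h2 := (h.hasFTaylorSeriesUpToOn s).eq_iteratedFDerivWithin_of_uniqueDiffOn
      (m := n) (by exact_mod_cast le_top) hs hx
  rw [iteratedDerivWithin_eq_iteratedFDerivWithin, iteratedDeriv_eq_iteratedFDeriv, ← h2]
  rfl

private lemma iteratedDeriv_odd_nonpos_of_nonpos
    (f : ℝ → ℝ) (hf : ContDiff ℝ (⊤ : ℕ∞) f) (hle : ∀ t, f t ≤ 0) (k : ℕ)
    (hzero : ∀ j ≤ 2 * k, iteratedDeriv j f 0 = 0) :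
    iteratedDeriv (2 * k + 1) f 0 ≤ 0 := by
  by_contra hpos
  push_neg at hpos
  set C := iteratedDeriv (2 * k + 1) f with hC
  have cont : Continuous C := hf.continuous_iteratedDeriv (2 * k + 1) (WithTop.coe_le_coe.mpr le_top)
  have hmem : C ⁻¹' Set.Ioi 0 ∈ nhds (0 : ℝ) := cont.continuousAt (Ioi_mem_nhds hpos)
  obtain ⟨δ, hδ0, hδ⟩ := Metric.mem_nhds_iff.mp hmem
  set x := δ / 2 with hxdef
  have hx : (0 : ℝ) < x := by positivity
  have hud : UniqueDiffOn ℝ (Icc (0 : ℝ) x) := uniqueDiffOn_Icc hx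
  have hdiff : DifferentiableOn ℝ (iteratedDerivWithin (2 * k) f (Icc 0 x)) (Ioo 0 x) := by
    have hd : Differentiable ℝ (iteratedDeriv (2 * k) f) :=
      hf.differentiable_iteratedDeriv (2 * k) (WithTop.coe_lt_coe.mpr (WithTop.coe_lt_top _))
    refine hd.differentiableOn.congr fun y hy => ?_
    exact iteratedDerivWithin_eq_of_contDiff' f hf hud _ (Ioo_subset_Icc_self hy)
  obtain ⟨ξ, hξ, heq⟩ := taylor_mean_remainder_lagrange (n := 2 * k) hx.ne
    ((hf.of_le (WithTop.coe_le_coe.mpr le_top)).contDiffOn) (by rw [uIcc_of_le hx.le, uIoo_of_le hx.le]; exact hdiff)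
  rw [uIcc_of_le hx.le] at heq
  rw [uIoo_of_le hx.le] at hξ
  have htaylor : taylorWithinEval f (2 * k) (Icc 0 x) 0 x = 0 := by
    rw [taylor_within_apply]
    refine Finset.sum_eq_zero fun j hj => ?_
    have hj' : j ≤ 2 * k := Nat.lt_succ_iff.mp (Finset.mem_range.mp hj)
    rw [iteratedDerivWithin_eq_of_contDiff' f hf hud _ (left_mem_Icc.mpr hx.le),
      hzero j hj', smul_zero]
  have hξC : iteratedDerivWithin (2 * k + 1) f (Icc 0 x) ξ = C ξ :=
    iteratedDerivWithin_eq_of_contDiff' f hf hud _ (Ioo_subset_Icc_self hξ)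
  rw [htaylor, sub_zero, hξC, sub_zero] at heq
  have hξpos : 0 < C ξ := by
    have : ξ ∈ Metric.ball (0 : ℝ) δ := by
      rw [Metric.mem_ball, Real.dist_eq, sub_zero, abs_of_pos hξ.1]
      calc ξ < x := hξ.2
        _ < δ := by rw [hxdef]; linarith
    exact hδ this
  have hfx : 0 < f x := by
    rw [heq]
    positivity
  exact absurd (hle x) (not_le.mpr hfx)

theorem iteratedDeriv_odd_zero_of_nonpos
    (f : ℝ → ℝ) (hf : ContDiff ℝ (⊤ : ℕ∞) f) (hle : ∀ t, f t ≤ 0) (k : ℕ)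
    (hzero : ∀ j ≤ 2 * k, iteratedDeriv j f 0 = 0) :
    iteratedDeriv (2 * k + 1) f 0 = 0 := by
  have h1 : iteratedDeriv (2 * k + 1) f 0 ≤ 0 :=
    iteratedDeriv_odd_nonpos_of_nonpos f hf hle k hzero
  set g : ℝ → ℝ := fun t => f (-t) with hg
  have hgc : ContDiff ℝ (⊤ : ℕ∞) g := hf.comp (contDiff_id.neg)
  have hgle : ∀ t, g t ≤ 0 := fun t => hle (-t)
  have hgzero : ∀ j ≤ 2 * k, iteratedDeriv j g 0 = 0 := by
    intro j hj
    rw [hg, iteratedDeriv_comp_neg, neg_zero, hzero j hj, smul_zero]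
  have h2 : iteratedDeriv (2 * k + 1) g 0 ≤ 0 :=
    iteratedDeriv_odd_nonpos_of_nonpos g hgc hgle k hgzero
  have h3 : iteratedDeriv (2 * k + 1) g 0 = -iteratedDeriv (2 * k + 1) f 0 := by
    rw [hg, iteratedDeriv_comp_neg, neg_zero, Odd.neg_one_pow ⟨k, by ring⟩]
    simp
  rw [h3] at h2
  linarith
end

section
/- Let f, g, h : ℝ → ℝ be C^∞ functions such that for all t ∈ ℝ and all x ∈ ℝ, f(t) + 2x·g(t) + x²·h(t) ≤ 0. Suppose f^(j)(0) = 0 for j = 0,…,2k+2, g^(j)(0) = 0 for j = 0,…,k-1, and h(0) < 0. Then g^(k)(0) = 0. -/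
set_option maxHeartbeats 1000000

open Set

lemma idw_eq_aux (f : ℝ → ℝ) (hf : ContDiff ℝ (⊤ : ℕ∞) f) {s : Set ℝ} (hs : UniqueDiffOn ℝ s) (n : ℕ) :
    ∀ y ∈ s, iteratedDerivWithin n f s y = iteratedDeriv n f y := by
  induction n with
  | zero => intro y hy; simp
  | succ n ih =>
    intro y hy
    have hsm : ContDiff ℝ (⊤ : ℕ∞) (iteratedDeriv n f) := by
      rw [iteratedDeriv_eq_iterate]
      exact ContDiff.iterate_deriv n (hf.of_le (by simp))
    rw [iteratedDerivWithin_succ, iteratedDeriv_succ,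
      derivWithin_congr (fun z hz => ih z hz) (ih y hy)]
    exact (hsm.differentiable (by simp)).differentiableAt.derivWithin (hs.uniqueDiffWithinAt hy)

theorem discriminant_argument
    (f g h : ℝ → ℝ) (hf : ContDiff ℝ (⊤ : ℕ∞) f) (hg : ContDiff ℝ (⊤ : ℕ∞) g)
    (hh : ContDiff ℝ (⊤ : ℕ∞) h) (k : ℕ)
    (hquad : ∀ t x : ℝ, f t + 2 * x * g t + x^2 * h t ≤ 0)
    (hfz : ∀ j ≤ 2 * k + 2, iteratedDeriv j f 0 = 0)
    (hgz : ∀ j < k, iteratedDeriv j g 0 = 0)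
    (hh0 : h 0 < 0) :
    iteratedDeriv k g 0 = 0 := by
  -- continuity of h at 0
  obtain ⟨δ, hδpos, hδ⟩ := Metric.continuousAt_iff.mp (hh.continuous.continuousAt (x := 0))
    (-h 0 / 2) (by linarith)
  obtain ⟨b, hb_def⟩ : ∃ b : ℝ, b = min (δ / 2) 1 := ⟨_, rfl⟩
  have hb : 0 < b := hb_def ▸ lt_min (by linarith) one_pos
  have hb1 : b ≤ 1 := hb_def ▸ min_le_right _ _
  have hbδ : b < δ := lt_of_le_of_lt (hb_def ▸ min_le_left _ _) (by linarith)
  have hUD : UniqueDiffOn ℝ (Icc (0:ℝ) b) := uniqueDiffOn_Icc hb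
  have h0mem : (0:ℝ) ∈ Icc (0:ℝ) b := ⟨le_refl _, hb.le⟩
  -- Taylor bounds
  obtain ⟨Cf, hCf⟩ := exists_taylor_mean_remainder_bound (n := 2*k+2) hb.le
    ((hf.of_le (WithTop.coe_le_coe.mpr le_top)).contDiffOn : ContDiffOn ℝ ((2*k+2 : ℕ)+1) f (Icc 0 b))
  obtain ⟨Cg, hCg⟩ := exists_taylor_mean_remainder_bound (n := k) hb.le
    ((hg.of_le (WithTop.coe_le_coe.mpr le_top)).contDiffOn : ContDiffOn ℝ ((k : ℕ)+1) g (Icc 0 b))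
  -- Taylor polynomials
  have Tf : ∀ x : ℝ, taylorWithinEval f (2*k+2) (Icc 0 b) 0 x = 0 := by
    intro x
    rw [taylor_within_apply]
    refine Finset.sum_eq_zero fun j hj => ?_
    rw [idw_eq_aux f hf hUD j 0 h0mem, hfz j (Nat.lt_succ_iff.mp (Finset.mem_range.mp hj))]
    simp
  obtain ⟨a, ha_def⟩ : ∃ a : ℝ, a = ((Nat.factorial k) : ℝ)⁻¹ * iteratedDeriv k g 0 := ⟨_, rfl⟩
  have Tg : ∀ x : ℝ, taylorWithinEval g k (Icc 0 b) 0 x = a * x ^ k := by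
    intro x
    rw [taylor_within_apply, Finset.sum_range_succ]
    have : ∀ j ∈ Finset.range k,
        (((Nat.factorial j) : ℝ)⁻¹ * (x - 0) ^ j) • iteratedDerivWithin j g (Icc 0 b) 0 = 0 := by
      intro j hj
      rw [idw_eq_aux g hg hUD j 0 h0mem, hgz j (Finset.mem_range.mp hj)]
      simp
    rw [Finset.sum_eq_zero this, idw_eq_aux g hg hUD k 0 h0mem]
    rw [ha_def]
    simp
    ring
  -- nonnegativity of constants
  have hCf0 : 0 ≤ Cf := by
    have h1 := (norm_nonneg _).trans (hCf b ⟨hb.le, le_refl _⟩)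
    have h2 : (0:ℝ) < (b - 0) ^ (2*k+2+1) := pow_pos (by linarith) _
    nlinarith
  have hCg0 : 0 ≤ Cg := by
    have h1 := (norm_nonneg _).trans (hCg b ⟨hb.le, le_refl _⟩)
    have h2 : (0:ℝ) < (b - 0) ^ (k+1) := pow_pos (by linarith) _
    nlinarith
  obtain ⟨M, hM_def⟩ : ∃ M : ℝ, M = -(3 * h 0) / 2 := ⟨_, rfl⟩
  have hM0 : 0 < M := by rw [hM_def]; linarith
  obtain ⟨K, hK_def⟩ : ∃ K : ℝ, K = 2 * (Cf * M) + 2 * Cg^2 := ⟨_, rfl⟩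
  have hK0 : 0 ≤ K := by rw [hK_def]; positivity
  -- main estimate
  have key : ∀ t : ℝ, t ∈ Ioc (0:ℝ) b → a^2 ≤ K * t := by
    intro t ⟨ht0, htb⟩
    have htmem : t ∈ Icc (0:ℝ) b := ⟨ht0.le, htb⟩
    have ht1 : t ≤ 1 := htb.trans hb1
    -- bounds from continuity of h
    have hht : |h t - h 0| < -h 0 / 2 := by
      have : dist t 0 < δ := by rw [Real.dist_eq, sub_zero, abs_of_pos ht0]; linarith
      simpa [Real.dist_eq] using hδ this
    obtain ⟨hht1, hht2⟩ := abs_sub_lt_iff.mp hht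
    have hhtneg : h t < 0 := by linarith
    have hhtM : -h t ≤ M := by rw [hM_def]; linarith
    -- f t ≤ 0
    have hft0 : f t ≤ 0 := by have := hquad t 0; simpa using this
    -- discriminant: g t ^ 2 ≤ f t * h t
    have hdisc : g t ^ 2 ≤ f t * h t := by
      have hne : h t ≠ 0 := hhtneg.ne
      have e : f t + 2 * (-(g t) / h t) * g t + (-(g t) / h t)^2 * h t
          = f t - g t ^ 2 / h t := by field_simp; ring
      have := hquad t (-(g t) / h t)
      rw [e] at this
      have : f t ≤ g t ^ 2 / h t := by linarith
      exact (le_div_iff_of_neg hhtneg).mp this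
    -- Taylor bounds at t
    have hfb : -f t ≤ Cf * t ^ (2*k+2+1) := by
      have h1 := hCf t htmem
      rw [Tf t, sub_zero, sub_zero, Real.norm_eq_abs] at h1
      exact (neg_le_abs (f t)).trans h1
    have hgb : (g t - a * t ^ k)^2 ≤ (Cg * t ^ (k+1))^2 := by
      have h1 := hCg t htmem
      rw [Tg t, sub_zero, Real.norm_eq_abs] at h1
      have h2 : 0 ≤ Cg * t ^ (k+1) := by positivity
      nlinarith [abs_nonneg (g t - a * t ^ k), sq_abs (g t - a * t ^ k)]
    -- combine
    have hfh : f t * h t ≤ (Cf * t ^ (2*k+2+1)) * M := by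
      have h1 : f t * h t = (-f t) * (-h t) := by ring
      rw [h1]
      exact mul_le_mul hfb hhtM (by linarith) ((by linarith : (0:ℝ) ≤ -f t).trans hfb)
    have step1 : (a * t ^ k)^2 ≤ 2 * (g t)^2 + 2 * (Cg * t ^ (k+1))^2 := by
      nlinarith [sq_nonneg (2 * g t - a * t ^ k), hgb]
    have pw1 : (a * t ^ k)^2 = a^2 * t^(2*k) := by
      have e : k * 2 = 2 * k := by omega
      rw [mul_pow, ← pow_mul, e]
    have pw2 : (Cg * t ^ (k+1))^2 = Cg^2 * t^(2*k+2) := by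
      have e : (k + 1) * 2 = 2 * k + 2 := by omega
      rw [mul_pow, ← pow_mul, e]
    have pw3 : t ^ (2*k+2+1) ≤ t ^ (2*k+2) :=
      pow_le_pow_of_le_one ht0.le ht1 (by omega)
    have pw4 : t ^ (2*k+2) = t^2 * t^(2*k) := by rw [← pow_add]; congr 1; omega
    have hand : a^2 * t^(2*k) ≤ (K * t) * t^(2*k) := by
      have c1 : a^2 * t^(2*k) ≤ 2 * (g t)^2 + 2 * Cg^2 * t^(2*k+2) := by
        rw [← pw1]; linarith [step1, pw2]
      have c2 : (g t)^2 ≤ Cf * M * t ^ (2*k+2) := by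
        calc (g t)^2 ≤ f t * h t := hdisc
          _ ≤ (Cf * t ^ (2*k+2+1)) * M := hfh
          _ = (Cf * M) * t ^ (2*k+2+1) := by ring
          _ ≤ (Cf * M) * t ^ (2*k+2) := mul_le_mul_of_nonneg_left pw3 (by positivity)
      have c3 : K * t^(2*k+2) ≤ K * t * t^(2*k) := by
        have ht2 : t^2 ≤ t := by nlinarith
        calc K * t^(2*k+2) = K * (t^2 * t^(2*k)) := by rw [pw4]
          _ ≤ K * (t * t^(2*k)) :=
            mul_le_mul_of_nonneg_left
              (mul_le_mul_of_nonneg_right ht2 (pow_nonneg ht0.le (2*k))) hK0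
          _ = K * t * t^(2*k) := by ring
      calc a^2 * t^(2*k) ≤ 2 * (g t)^2 + 2 * Cg^2 * t^(2*k+2) := c1
        _ ≤ 2 * (Cf * M * t ^ (2*k+2)) + 2 * Cg^2 * t^(2*k+2) := by linarith
        _ = K * t^(2*k+2) := by rw [hK_def]; ring
        _ ≤ K * t * t^(2*k) := c3
    exact le_of_mul_le_mul_right hand (pow_pos ht0 (2*k))
  -- conclude a = 0
  have ha2 : a^2 ≤ 0 := by
    apply le_of_forall_pos_le_add
    intro ε hε
    have htpos : 0 < min b (ε / (K + 1)) := lt_min hb (by positivity)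
    have := key (min b (ε / (K + 1))) ⟨htpos, min_le_left _ _⟩
    have h1 : min b (ε / (K + 1)) ≤ ε / (K + 1) := min_le_right _ _
    have h2 : K * min b (ε / (K + 1)) ≤ ε := by
      have e1 : K * min b (ε / (K + 1)) ≤ K * (ε / (K + 1)) :=
        mul_le_mul_of_nonneg_left (min_le_right _ _) hK0
      have e2 : K * (ε / (K + 1)) ≤ (K + 1) * (ε / (K + 1)) :=
        mul_le_mul_of_nonneg_right (by linarith) (by positivity)
      have e3 : (K + 1) * (ε / (K + 1)) = ε := by field_simp
      linarith
    linarith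
  have ha : a = 0 := by nlinarith [sq_nonneg a]
  have hk : ((Nat.factorial k) : ℝ)⁻¹ ≠ 0 := by positivity
  rw [ha_def] at ha
  rcases mul_eq_zero.mp ha with h1 | h1
  · exact absurd h1 hk
  · exact h1
end

section
/- Let λ : ℝ → ℝ be continuous and positive with ∫_{t₁}^{t} λ(s) ds → +∞ as t → ∞, and let y : ℝ → ℝ be differentiable with -1 < y(t) < 1 and y'(t) ≥ λ(t)·(1 - y(t)²) for all t. Then there exists T such that y(t) > 0 for all t ≥ T. -/
theorem eventually_pos_of_riccati
    (lam y : ℝ → ℝ) (hlam : Continuous lam) (hpos : ∀ t, 0 < lam t)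
    (hint : ∀ t₁ : ℝ, Filter.Tendsto (fun t => ∫ s in t₁..t, lam s)
      Filter.atTop Filter.atTop)
    (hy : Differentiable ℝ y)
    (hbound : ∀ t, -1 < y t ∧ y t < 1)
    (hineq : ∀ t, deriv y t ≥ lam t * (1 - (y t)^2)) :
    ∃ T : ℝ, ∀ t ≥ T, 0 < y t := by
  have hderiv : ∀ t, 0 < deriv y t := by
    intro t
    have h1 := (hbound t).1; have h2 := (hbound t).2
    have h3 : 0 < 1 - (y t)^2 := by nlinarith
    have := hineq t
    nlinarith [mul_pos (hpos t) h3]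
  have hmono : StrictMono y :=
    strictMono_of_deriv_pos hderiv
  by_cases h : ∃ t₀, 0 < y t₀
  · obtain ⟨t₀, ht₀⟩ := h
    exact ⟨t₀, fun t ht => lt_of_lt_of_le ht₀ (hmono.monotone ht)⟩
  · push_neg at h
    exfalso
    set c := 1 - (y 0)^2 with hc
    have hc0 : 0 < c := by nlinarith [(hbound 0).1, (hbound 0).2]
    set F : ℝ → ℝ := fun t => ∫ s in (0:ℝ)..t, lam s with hF
    have hFd : ∀ t, HasDerivAt F (lam t) t := fun t =>
      (hlam.integral_hasStrictDerivAt 0 t).hasDerivAt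
    set g : ℝ → ℝ := fun t => y t - c * F t with hg
    have hgd : ∀ t, HasDerivAt g (deriv y t - c * lam t) t := fun t =>
      ((hy t).hasDerivAt).sub ((hFd t).const_mul c)
    have hgmono : MonotoneOn g (Set.Ici 0) := by
      apply monotoneOn_of_deriv_nonneg (convex_Ici 0)
      · have hFdiff : Differentiable ℝ F := fun t => (hFd t).differentiableAt
        exact (hy.continuous.sub (continuous_const.mul hFdiff.continuous)).continuousOn
      · intro t ht
        exact ((hgd t).differentiableAt).differentiableWithinAt
      · intro t ht
        rw [interior_Ici] at ht
        rw [(hgd t).deriv]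
        have hle : y 0 ≤ y t := hmono.monotone (le_of_lt ht)
        have hsq : (y t)^2 ≤ (y 0)^2 := by
          have := h t
          nlinarith
        have : lam t * c ≤ deriv y t := by
          calc lam t * c ≤ lam t * (1 - (y t)^2) := by
                have := hpos t; nlinarith
            _ ≤ deriv y t := hineq t
        linarith
    have key : ∀ t ≥ (0:ℝ), y 0 + c * F t ≤ y t := by
      intro t ht
      have := hgmono (Set.self_mem_Ici) (Set.mem_Ici.mpr ht) ht
      have hF0 : F 0 = 0 := by simp [hF]
      simp only [hg, hF0, mul_zero, sub_zero] at this
      linarith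
    have htend : Filter.Tendsto (fun t => c * F t) Filter.atTop Filter.atTop :=
      (hint 0).const_mul_atTop hc0
    have := (htend.eventually_gt_atTop (-y 0)).and (Filter.eventually_ge_atTop (0:ℝ))
    obtain ⟨t, ht1, ht2⟩ := this.exists
    have := key t ht2
    have := h t
    linarith
end

section
/- In a generalized Heisenberg algebra, for all U, V ∈ 𝔳 and Z ∈ 𝔷: [J_Z U, J_Z V] = -|Z|²·[U,V] - 2⟨U, J_Z V⟩·Z. -/
open scoped RealInnerProductSpace

variable {V Z : Type*} [NormedAddCommGroup V] [InnerProductSpace ℝ V]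
  [NormedAddCommGroup Z] [InnerProductSpace ℝ Z]

/-- In a generalized Heisenberg algebra,
`[J_Z U, J_Z V] = -|Z|² [U,V] - 2⟨U, J_Z V⟩ Z`. -/
theorem genHeisenberg_bracket_JJ
    (bracket : V →ₗ[ℝ] V →ₗ[ℝ] Z)
    (hskew : ∀ v w : V, bracket v w = - bracket w v)
    (J : Z → V →ₗ[ℝ] V)
    (hJdef : ∀ (z : Z) (v w : V), ⟪J z v, w⟫ = ⟪z, bracket v w⟫)
    (hJsq : ∀ (z : Z) (v : V), J z (J z v) = -(‖z‖^2) • v) :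
    ∀ (u v : V) (z : Z),
      bracket (J z u) (J z v)
        = -(‖z‖^2) • bracket u v - (2 * ⟪u, J z v⟫) • z := by
  have hskewJ : ∀ (z : Z) (a b : V), ⟪J z a, b⟫ = -⟪a, J z b⟫ := by
    intro z a b
    rw [hJdef, hskew, inner_neg_right, ← hJdef, real_inner_comm]
  have hJadd : ∀ (w z : Z) (v : V), J (w + z) v = J w v + J z v := by
    intro w z v
    apply ext_inner_right ℝ
    intro x
    rw [inner_add_left, hJdef, hJdef, hJdef, inner_add_left]
  have hanti : ∀ (w z : Z) (a : V),
      J w (J z a) + J z (J w a) = (-(2 * ⟪w, z⟫)) • a := by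
    intro w z a
    have hn : ‖w + z‖ ^ 2 = ‖w‖ ^ 2 + 2 * ⟪w, z⟫ + ‖z‖ ^ 2 := by
      rw [← real_inner_self_eq_norm_sq, ← real_inner_self_eq_norm_sq,
        ← real_inner_self_eq_norm_sq, real_inner_add_add_self]
    have h := hJsq (w + z) a
    simp only [hJadd, map_add, hJsq, hn] at h
    linear_combination (norm := module) h
  intro u v z
  apply ext_inner_left ℝ
  intro w
  have e1 : ⟪w, bracket (J z u) (J z v)⟫ = ⟪J w (J z u), J z v⟫ := (hJdef w _ _).symm
  have e2 : J w (J z u) = (-(2 * ⟪w, z⟫)) • u - J z (J w u) := by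
    have := hanti w z u
    linear_combination (norm := module) this
  have e3 : ⟪J z (J w u), J z v⟫ = (‖z‖ ^ 2) * ⟪J w u, v⟫ := by
    rw [hskewJ, hJsq]
    simp [inner_smul_right]
  have e4 : ⟪u, J z v⟫ = -⟪J z u, v⟫ := by rw [hskewJ]; ring
  rw [e1, e2, inner_sub_left, real_inner_smul_left, e3, hJdef w u v,
    inner_sub_right, real_inner_smul_right, real_inner_smul_right, e4]
  ring
end

section
/- Let a, b, c, d be real numbers with a = (1+|V|²)/2, b = (1+s²+|Y|²)/2, c = s|V|/2, d = |Y||V|/2, where |V|² + |Y|² + s² = 1. Then the eigenvalues of the symmetric 4×4 matrix B with block structure [[aI₂, C],[Cᵀ, bI₂]], where C = [[c, d],[-d, c]], are exactly 1 and 1/2. -/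
theorem hessian_block_eigenvalues
    (s vV vY : ℝ) (hV : 0 ≤ vV) (hY : 0 ≤ vY)
    (hunit : vV^2 + vY^2 + s^2 = 1)
    (a b c d : ℝ)
    (ha : a = (1 + vV^2) / 2) (hb : b = (1 + s^2 + vY^2) / 2)
    (hc : c = s * vV / 2) (hd : d = vY * vV / 2)
    (B : Matrix (Fin 4) (Fin 4) ℝ)
    (hB : B = !![a, 0, c, d; 0, a, -d, c; c, -d, b, 0; d, c, 0, b]) :
    {μ : ℝ | ∃ x : Fin 4 → ℝ, x ≠ 0 ∧ B.mulVec x = μ • x} = {1, 1/2} := by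
  subst hB
  have hab : a + b = 3/2 := by rw [ha, hb]; linarith [hunit]
  have hdet : a * b - c^2 - d^2 = 1/2 := by
    rw [ha, hb, hc, hd]; linear_combination hunit / 4
  ext μ
  simp only [Set.mem_setOf_eq, Set.mem_insert_iff, Set.mem_singleton_iff]
  constructor
  · rintro ⟨x, hx, heq⟩
    have h0 := congrFun heq 0
    have h1 := congrFun heq 1
    have h2 := congrFun heq 2
    have h3 := congrFun heq 3
    simp [Matrix.mulVec, dotProduct, Fin.sum_univ_four] at h0 h1 h2 h3
    have k0 : ((μ - a) * (μ - b) - (c^2 + d^2)) * x 0 = 0 := by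
      linear_combination (b - μ) * h0 - c * h2 - d * h3
    have k1 : ((μ - a) * (μ - b) - (c^2 + d^2)) * x 1 = 0 := by
      linear_combination (b - μ) * h1 + d * h2 - c * h3
    have k2 : ((μ - a) * (μ - b) - (c^2 + d^2)) * x 2 = 0 := by
      linear_combination (a - μ) * h2 - c * h0 + d * h1
    have k3 : ((μ - a) * (μ - b) - (c^2 + d^2)) * x 3 = 0 := by
      linear_combination (a - μ) * h3 - d * h0 - c * h1
    have hx' : ∃ i, x i ≠ 0 := by
      by_contra h
      push_neg at h
      exact hx (funext h)
    obtain ⟨i, hi⟩ := hx'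
    have hq : (μ - a) * (μ - b) - (c^2 + d^2) = 0 := by
      by_contra h
      fin_cases i
      · exact hi ((mul_eq_zero.mp k0).resolve_left h)
      · exact hi ((mul_eq_zero.mp k1).resolve_left h)
      · exact hi ((mul_eq_zero.mp k2).resolve_left h)
      · exact hi ((mul_eq_zero.mp k3).resolve_left h)
    have hfac : (μ - 1) * (μ - 1/2) = 0 := by
      linear_combination hq + μ * hab - hdet
    rcases mul_eq_zero.mp hfac with h | h
    · left; linarith
    · right; linarith
  · intro hμ
    have hq : (μ - a) * (μ - b) = c^2 + d^2 := by
      rcases hμ with h | h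
      · subst h; linear_combination hdet - hab
      · subst h; linear_combination hdet - hab / 2
    by_cases hma : μ - a = 0
    · have hcd : c^2 + d^2 = 0 := by rw [← hq, hma]; ring
      have hc2 : c^2 = 0 := by nlinarith [sq_nonneg c, sq_nonneg d]
      have hd2 : d^2 = 0 := by nlinarith [sq_nonneg c, sq_nonneg d]
      have hc0 : c = 0 := by exact pow_eq_zero_iff (by norm_num) |>.mp hc2
      have hd0 : d = 0 := by exact pow_eq_zero_iff (by norm_num) |>.mp hd2
      have hmb : μ - b ≠ 0 := by
        intro hmb
        have hab' : a = b := by linarith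
        have hv2 : vV^2 = 1/2 := by rw [ha, hb] at hab'; linarith [hunit]
        have hv : vV ≠ 0 := by intro h; rw [h] at hv2; norm_num at hv2
        have hsv : s * vV = 0 := by rw [hc0] at hc; linarith
        have hyv : vY * vV = 0 := by rw [hd0] at hd; linarith
        have hs : s = 0 := (mul_eq_zero.mp hsv).resolve_right hv
        have hy : vY = 0 := (mul_eq_zero.mp hyv).resolve_right hv
        rw [hs, hy] at hunit
        norm_num at hunit
        rcases hunit with h | h <;> rw [h] at hv2 <;> norm_num at hv2
      refine ⟨![μ - b, 0, c, d], ?_, ?_⟩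
      · intro h
        have := congrFun h 0
        simp at this
        exact hmb (by linarith)
      · funext i
        fin_cases i <;>
          simp [Matrix.mulVec, dotProduct, Fin.sum_univ_four] <;>
          first
          | ring1
          | linear_combination hq
          | linear_combination -hq
    · refine ⟨![c, -d, μ - a, 0], ?_, ?_⟩
      · intro h
        have := congrFun h 2
        simp at this
        exact hma (by linarith)
      · funext i
        fin_cases i <;>
          simp [Matrix.mulVec, dotProduct, Fin.sum_univ_four] <;>
          first
          | ring1
          | linear_combination hq
          | linear_combination -hq
end

section
/- Let θ ∈ (0, π/2), s ∈ ℝ, and V, Y nonzero with s² + |V|² + |Y|² = 1; set χ∞ = (1-s)² + |Y|². Define the 3×3 Hermitian matrix H = [[a, c-id, f-ig],[c+id, b, h-iℓ],[f+ig, h+iℓ, t]] with a = 1/2 + (|V|²/(2χ∞))((1-s)² + |Y|²cos²θ), b = 1/2 + (|V|²/(2χ∞))(|Y|² + (1-s)²cos²θ), c = (|V|²/(2χ∞))(1-s)|Y|sin²θ, d = -(1+|V|²)cos θ/2, f = s|V|/2, g = |Y||V|cos θ/2, h = -|Y||V|/2, ℓ = s|V|cos θ/2, t = (1+s²+|Y|²)/2.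 Then the leading principal 2×2 minor equals (1/4)(1+|V|²)sin²θ and det H = (1/4)sin²θ - (|V|⁴|Y|²/(8χ∞))sin⁴θ. -/
open Complex in
private lemma aux_minor2 (a b c d R : ℝ)
    (key : a*b - (c^2 + d^2) = R) :
    (a : ℂ) * (b : ℂ) - ((c : ℂ) - (d : ℂ)*I) * ((c : ℂ) + (d : ℂ)*I) = ((R : ℝ) : ℂ) := by
  rw [Complex.ext_iff]
  constructor
  · simp [Complex.mul_re]
    linarith [key]
  · simp [Complex.mul_im]
    ring

open Complex in
private lemma aux_det3 (a b c d f g h ℓ t R : ℝ)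
    (H : Matrix (Fin 3) (Fin 3) ℂ)
    (hH : H = !![(a : ℂ), (c : ℂ) - (d : ℂ) * I, (f : ℂ) - (g : ℂ) * I;
                 (c : ℂ) + (d : ℂ) * I, (b : ℂ), (h : ℂ) - (ℓ : ℂ) * I;
                 (f : ℂ) + (g : ℂ) * I, (h : ℂ) + (ℓ : ℂ) * I, (t : ℂ)])
    (key : a*b*t + 2*((c*h - d*ℓ)*f + (c*ℓ + d*h)*g)
      - a*(h^2+ℓ^2) - b*(f^2+g^2) - t*(c^2+d^2) = R) :
    H.det = ((R : ℝ) : ℂ) := by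
  rw [hH, Matrix.det_fin_three, Complex.ext_iff]
  constructor
  · simp [Complex.mul_re, Complex.mul_im]
    linarith [key]
  · simp [Complex.mul_re, Complex.mul_im]
    ring

set_option maxHeartbeats 4000000 in
open Complex in
theorem hermitian_matrix_minors
    (θ s vV vY χ : ℝ) (hθ : 0 < θ ∧ θ < Real.pi / 2)
    (hV : 0 < vV) (hY : 0 < vY)
    (hunit : s^2 + vV^2 + vY^2 = 1)
    (hχ : χ = (1 - s)^2 + vY^2)
    (a b c d f g h ℓ t : ℝ)
    (ha : a = 1/2 + (vV^2 / (2 * χ)) * ((1 - s)^2 + vY^2 * Real.cos θ^2))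
    (hb : b = 1/2 + (vV^2 / (2 * χ)) * (vY^2 + (1 - s)^2 * Real.cos θ^2))
    (hc : c = (vV^2 / (2 * χ)) * (1 - s) * vY * Real.sin θ^2)
    (hd : d = -(1 + vV^2) * Real.cos θ / 2)
    (hf : f = s * vV / 2)
    (hg : g = vY * vV * Real.cos θ / 2)
    (hh : h = -(vY * vV) / 2)
    (hℓ : ℓ = s * vV * Real.cos θ / 2)
    (ht : t = (1 + s^2 + vY^2) / 2)
    (H : Matrix (Fin 3) (Fin 3) ℂ)
    (hH : H = !![(a : ℂ), (c : ℂ) - (d : ℂ) * I, (f : ℂ) - (g : ℂ) * I;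
                 (c : ℂ) + (d : ℂ) * I, (b : ℂ), (h : ℂ) - (ℓ : ℂ) * I;
                 (f : ℂ) + (g : ℂ) * I, (h : ℂ) + (ℓ : ℂ) * I, (t : ℂ)]) :
    H 0 0 * H 1 1 - H 0 1 * H 1 0
        = (((1/4) * (1 + vV^2) * Real.sin θ^2 : ℝ) : ℂ) ∧
    H.det = (((1/4) * Real.sin θ^2
        - (vV^4 * vY^2 / (8 * χ)) * Real.sin θ^4 : ℝ) : ℂ) := by
  have hχ0 : χ ≠ 0 := by rw [hχ]; positivity
  have hpyth : Real.sin θ^2 = 1 - Real.cos θ^2 := by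
    have := Real.sin_sq_add_cos_sq θ; linarith
  have hpyth4 : Real.sin θ^4 = (1 - Real.cos θ^2)^2 := by
    rw [show Real.sin θ^4 = (Real.sin θ^2)^2 by ring, hpyth]
  have hv2 : vV^2 = 1 - s^2 - vY^2 := by linarith
  have hv4 : vV^4 = (1 - s^2 - vY^2)^2 := by
    rw [show vV^4 = (vV^2)^2 by ring, hv2]
  have key1 : a*b - (c^2 + d^2) = (1/4) * (1 + vV^2) * Real.sin θ^2 := by
    rw [ha, hb, hc, hd, hχ, hpyth]
    have h0 : ((1:ℝ) - s)^2 + vY^2 ≠ 0 := by positivity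
    field_simp
    ring
  have key2 : a*b*t + 2*((c*h - d*ℓ)*f + (c*ℓ + d*h)*g)
      - a*(h^2+ℓ^2) - b*(f^2+g^2) - t*(c^2+d^2)
      = (1/4) * Real.sin θ^2 - (vV^4 * vY^2 / (8 * χ)) * Real.sin θ^4 := by
    rw [ha, hb, hc, hd, hf, hg, hh, hℓ, ht, hχ, hpyth4, hpyth, hv4, hv2]
    have h0 : ((1:ℝ) - s)^2 + vY^2 ≠ 0 := by positivity
    field_simp
    ring_nf
    rw [hv2]
    ring
  have hentry00 : H 0 0 = (a : ℂ) := by rw [hH]; rfl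
  have hentry11 : H 1 1 = (b : ℂ) := by rw [hH]; rfl
  have hentry01 : H 0 1 = (c : ℂ) - (d : ℂ) * I := by rw [hH]; rfl
  have hentry10 : H 1 0 = (c : ℂ) + (d : ℂ) * I := by rw [hH]; rfl
  refine ⟨?_, ?_⟩
  · rw [hentry00, hentry11, hentry01, hentry10]
    exact aux_minor2 a b c d _ key1
  · exact aux_det3 a b c d f g h ℓ t _ H hH key2
end
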